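/- arXiv:1703.08768 — 5 statements merged into one kernel-verified Lean document; each statement's English description precedes it below -/
import Mathlib

section
/- Assume that every simple graph on 25 vertices contains a 4-clique or an independent 5-set (i.e., R(4,5) ≤ 25). Then in every simple graph on 48 vertices that contains no 5-clique and no independent 5-set, every vertex has degree 23 or 24. -/
lemma ramsey_deg_le
    (hR45 : ∀ G : SimpleGraph (Fin 25),
      (∃ s : Finset (Fin 25), G.IsNClique 4 s) ∨ (∃ s : Finset (Fin 25), Gᶜ.IsNClique 5 s))
    (H : SimpleGraph (Fin 48)) [DecidableRel H.Adj]
    (h5 : H.CliqueFree 5) (hi : Hᶜ.CliqueFree 5) (v : Fin 48) : H.degree v ≤ 24 := by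
  by_contra h
  push_neg at h
  have hcard : 25 ≤ (H.neighborFinset v).card := h
  obtain ⟨f⟩ : Nonempty (Fin 25 ↪ (H.neighborFinset v : Finset (Fin 48))) := by
    apply Function.Embedding.nonempty_of_card_le
    rw [Fintype.card_fin, Fintype.card_coe]
    exact hcard
  let g : Fin 25 ↪ Fin 48 := f.trans (Function.Embedding.subtype _)
  have hg : ∀ a, H.Adj v (g a) := fun a =>
    (SimpleGraph.mem_neighborFinset H v (g a)).mp (f a).2
  rcases hR45 (H.comap g) with ⟨t, ht⟩ | ⟨t, ht⟩
  · apply h5 (insert v (t.map g))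
    have hvnot : v ∉ t.map g := by
      simp only [Finset.mem_map]
      rintro ⟨a, _, ha⟩
      exact H.irrefl (ha ▸ hg a)
    constructor
    · intro x hx y hy hxy
      simp only [Finset.coe_insert, Set.mem_insert_iff, Finset.mem_coe, Finset.mem_map] at hx hy
      rcases hx with rfl | ⟨a, ha, rfl⟩
      · rcases hy with rfl | ⟨b, hb, rfl⟩
        · exact absurd rfl hxy
        · exact hg b
      · rcases hy with rfl | ⟨b, hb, rfl⟩
        · exact (hg a).symm
        · have hab : a ≠ b := by rintro rfl; exact hxy rfl
          exact ht.1 ha hb (fun hc => hab (by simpa using hc))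
    · rw [Finset.card_insert_of_notMem hvnot, Finset.card_map, ht.2]
  · apply hi (t.map g)
    constructor
    · intro x hx y hy hxy
      simp only [Finset.mem_coe, Finset.mem_map] at hx hy
      obtain ⟨a, ha, rfl⟩ := hx
      obtain ⟨b, hb, rfl⟩ := hy
      have hab : a ≠ b := by rintro rfl; exact hxy rfl
      have := ht.1 ha hb hab
      rw [SimpleGraph.compl_adj] at this ⊢
      exact ⟨hxy, this.2⟩
    · rw [Finset.card_map, ht.2]

/-- Assuming R(4,5) ≤ 25, every vertex of a (5,5)-Ramsey graph on 48 vertices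
has degree 23 or 24. -/
theorem degree_of_ramsey55_48
    (hR45 : ∀ G : SimpleGraph (Fin 25),
      (∃ s : Finset (Fin 25), G.IsNClique 4 s) ∨ (∃ s : Finset (Fin 25), Gᶜ.IsNClique 5 s))
    (F : SimpleGraph (Fin 48)) [DecidableRel F.Adj]
    (h5 : F.CliqueFree 5) (hi : Fᶜ.CliqueFree 5) (v : Fin 48) :
    F.degree v = 23 ∨ F.degree v = 24 := by
  have h1 : F.degree v ≤ 24 := ramsey_deg_le hR45 F h5 hi v
  have h2 : Fᶜ.degree v ≤ 24 := by
    apply ramsey_deg_le hR45 Fᶜ hi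
    rwa [compl_compl]
  have h3 : Fᶜ.degree v = 47 - F.degree v := by
    rw [SimpleGraph.degree_compl]
    simp
  have h4 : F.degree v ≤ 47 := le_trans h1 (by norm_num)
  omega
end

section
/- Let F be a simple graph on 48 vertices in which every vertex has degree 23 or 24. Then either F contains a vertex of degree 24 that is adjacent in F to at least 12 vertices of degree 24 in F, or the complement graph of F contains a vertex of degree 24 in the complement that is adjacent in the complement to at least 12 vertices of degree 24 in the complement. -/
/-!
Let `A` be the set of vertices of degree 24 in `F`; since degrees in `Fᶜ` are `47 - d`, its
complement `B` is the set of vertices of degree 24 in `Fᶜ`. If the theorem failed, every `a ∈ A`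
would have at most 11 of its 24 neighbours in `A`, hence at least 13 in `B`, and symmetrically
every `b ∈ B` would have at least 13 `Fᶜ`-neighbours in `A`. Each pair of `A × B` is an edge of
exactly one of `F`, `Fᶜ`, so `13 · 48 ≤ |A| · |B| ≤ 24²`, which is false.
-/

open Finset

namespace SimpleGraph

variable {V : Type*} [Fintype V] (G : SimpleGraph V) [DecidableRel G.Adj]
  (p : V → Prop) [DecidablePred p]

theorem sum_card_neighborFinset_filter_comm (q : V → Prop) [DecidablePred q] :
    ∑ a with p a, #{w ∈ G.neighborFinset a | q w} =
      ∑ b with q b, #{w ∈ G.neighborFinset b | p w} := by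
  convert sum_card_bipartiteAbove_eq_sum_card_bipartiteBelow G.Adj (s := {a | p a}) (t := {b | q b})
    using 3 with a _ b _ <;> ext <;> simp [and_comm, adj_comm]

theorem card_neighborFinset_filter_not_add_compl [DecidableEq V] {v : V} (hv : p v) :
    #{w ∈ G.neighborFinset v | ¬p w} + #{w ∈ Gᶜ.neighborFinset v | ¬p w} = #{w | ¬p w} := by
  rw [← card_union_of_disjoint, ← filter_union]
  · congr 1
    ext w
    by_cases hw : w = v
    · simp [hw, hv]
    · by_cases h : G.Adj v w <;> simp [compl_adj, h, Ne.symm hw]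
  · rw [neighborFinset_compl]
    exact disjoint_filter_filter (disjoint_compl_right.mono_right sdiff_subset)

theorem mul_card_le_card_filter_mul_card_filter_not [DecidableEq V] (m : ℕ)
    (hG : ∀ a, p a → m ≤ #{w ∈ G.neighborFinset a | ¬p w})
    (hGc : ∀ b, ¬p b → m ≤ #{w ∈ Gᶜ.neighborFinset b | p w}) :
    m * Fintype.card V ≤ #{v | p v} * #{v | ¬p v} := by
  have hcross : m * #{v | p v} ≤ ∑ a with p a, #{w ∈ G.neighborFinset a | ¬p w} := by
    simpa [mul_comm] using card_nsmul_le_sum _ _ m fun a ha => hG a (mem_filter.1 ha).2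
  have hcrossCompl : m * #{v | ¬p v} ≤ ∑ a with p a, #{w ∈ Gᶜ.neighborFinset a | ¬p w} := by
    rw [sum_card_neighborFinset_filter_comm]
    simpa [mul_comm] using card_nsmul_le_sum _ _ m fun b hb => hGc b (mem_filter.1 hb).2
  have hpairs : ∑ a with p a, (#{w ∈ G.neighborFinset a | ¬p w} +
      #{w ∈ Gᶜ.neighborFinset a | ¬p w}) = #{v | p v} * #{v | ¬p v} := by
    rw [sum_congr rfl fun a ha => G.card_neighborFinset_filter_not_add_compl p (mem_filter.1 ha).2,
      sum_const, smul_eq_mul]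
  rw [← card_univ, ← card_filter_add_card_filter_not (s := univ) p]
  rw [sum_add_distrib] at hpairs
  linarith

end SimpleGraph

/-- If every vertex of a 48-vertex graph F has degree 23 or 24, then F or its
complement has a vertex of degree 24 adjacent to at least 12 vertices of
degree 24 (degrees taken in the same graph). -/
theorem exists_deg24_with_12_deg24_neighbors
    (F : SimpleGraph (Fin 48)) [DecidableRel F.Adj]
    (hdeg : ∀ v, F.degree v = 23 ∨ F.degree v = 24) :
    (∃ a, F.degree a = 24 ∧
      12 ≤ ((F.neighborFinset a).filter fun w => F.degree w = 24).card) ∨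
    (∃ a, Fᶜ.degree a = 24 ∧
      12 ≤ ((Fᶜ.neighborFinset a).filter fun w => Fᶜ.degree w = 24).card) := by
  by_contra! ⟨hF, hFc⟩
  have hcompl (v : Fin 48) : Fᶜ.degree v = 24 ↔ ¬F.degree v = 24 := by
    rw [F.degree_compl, Fintype.card_fin]
    have := hdeg v
    omega
  have hcount := F.mul_card_le_card_filter_mul_card_filter_not (fun v => F.degree v = 24) 13
    (fun a ha => by
      have hsplit := card_filter_add_card_filter_not (s := F.neighborFinset a)
        fun w => F.degree w = 24
      rw [F.card_neighborFinset_eq_degree, ha] at hsplit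
      have hfew := hF a ha
      omega)
    (fun b hb => by
      have hsplit := card_filter_add_card_filter_not (s := Fᶜ.neighborFinset b)
        fun w => Fᶜ.degree w = 24
      rw [Fᶜ.card_neighborFinset_eq_degree, (hcompl b).2 hb] at hsplit
      have hfew := hFc b ((hcompl b).2 hb)
      simp only [hcompl, not_not] at hsplit hfew
      omega)
  have hsplit : #{v | F.degree v = 24} + #{v | ¬F.degree v = 24} = 48 :=
    card_filter_add_card_filter_not _
  have hamgm := four_mul_le_sq_add #{v | F.degree v = 24} #{v | ¬F.degree v = 24}
  rw [Fintype.card_fin] at hcount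
  rw [hsplit] at hamgm
  linarith
end

section
/- Let F be a simple graph with adjacent vertices a and b such that every vertex of F other than a and b is adjacent to a or to b, and suppose the subgraphs of F induced on N(a) and on N(b) each contain no 4-clique and no independent 5-set. Let K = N(a) ∩ N(b), let A = N(b) \ (N(a) ∪ {a}), and let B = N(a) \ (N(b) ∪ {b}). Then F contains no 5-clique and no independent 5-set if and only if there is no 5-element vertex set W ⊆ K ∪ A ∪ B with W ∩ A ≠ ∅ and W ∩ B ≠ ∅ such that W is a clique of F or an independent set of F. -/
/-!
A 5-clique or independent 5-set `S` of `F` either contains `a` or `b`, or avoids both. A 5-clique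
through `a` leaves a 4-clique in `N(a)`. An independent 5-set through `a` lies in `N(b)`, since
every vertex not adjacent to `a` is adjacent to `b`. If `S` avoids `a` and `b`, it lies in
`K ∪ A ∪ B`, and it cannot lie inside `N(a) = K ∪ B ∪ {b}` or `N(b) = K ∪ A ∪ {a}`; so it meets
both `A` and `B`, which is exactly what the criterion excludes.
-/

open Set

namespace SimpleGraph

variable {V : Type*}

theorem compl_induce (G : SimpleGraph V) (s : Set V) : (G.induce s)ᶜ = Gᶜ.induce s := by
  ext x y
  simp [Subtype.ext_iff]

theorem IsNClique.not_cliqueFreeOn_neighborSet {G : SimpleGraph V} {n : ℕ} {S : Finset V}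
    {a : V} (hS : G.IsNClique (n + 1) S) (ha : a ∈ S) :
    ¬ G.CliqueFreeOn (G.neighborSet a) n := by
  classical
  refine fun h => h (fun v hv => ?_) (hS.erase_of_mem ha)
  obtain ⟨hva, hvS⟩ := Finset.mem_erase.mp hv
  exact hS.isClique ha hvS hva.symm

variable {F : SimpleGraph V} {a b : V}

theorem IsClique.subset_neighborSet_of_compl (hab : F.Adj a b)
    (hcov : ∀ v : V, v ≠ a → v ≠ b → F.Adj a v ∨ F.Adj b v) {S : Set V}
    (hS : Fᶜ.IsClique S) (ha : a ∈ S) : S ⊆ F.neighborSet b := by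
  intro v hv
  rcases eq_or_ne v a with rfl | hva
  · exact hab.symm
  have hav : ¬ F.Adj a v := ((compl_adj F a v).mp (hS ha hv hva.symm)).2
  have hvb : v ≠ b := by
    rintro rfl
    exact hav hab
  exact (hcov v hva hvb).resolve_left hav

theorem subset_union_and_inter_nonempty_of_not_subset_neighborSet
    (hcov : ∀ v : V, v ≠ a → v ≠ b → F.Adj a v ∨ F.Adj b v) {S : Set V}
    (ha : a ∉ S) (hb : b ∉ S) (hSa : ¬ S ⊆ F.neighborSet a) (hSb : ¬ S ⊆ F.neighborSet b) :
    S ⊆ (F.neighborSet a ∩ F.neighborSet b) ∪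
        (F.neighborSet b \ (F.neighborSet a ∪ {a})) ∪
        (F.neighborSet a \ (F.neighborSet b ∪ {b})) ∧
      (S ∩ (F.neighborSet b \ (F.neighborSet a ∪ {a}))).Nonempty ∧
      (S ∩ (F.neighborSet a \ (F.neighborSet b ∪ {b}))).Nonempty := by
  obtain ⟨u, huS, hua⟩ := not_subset.mp hSa
  obtain ⟨w, hwS, hwb⟩ := not_subset.mp hSb
  have hcovS : ∀ v ∈ S, v ≠ a ∧ v ≠ b ∧ (F.Adj a v ∨ F.Adj b v) := fun v hv =>
    have hva : v ≠ a := fun h => ha (h ▸ hv)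
    have hvb : v ≠ b := fun h => hb (h ▸ hv)
    ⟨hva, hvb, hcov v hva hvb⟩
  refine ⟨fun v hv => ?_, ⟨u, huS, ?_⟩, ⟨w, hwS, ?_⟩⟩ <;>
    simp only [mem_union, mem_inter_iff, mem_sdiff, mem_singleton_iff, mem_neighborSet] at hua hwb ⊢
  · have := hcovS v hv; tauto
  · have := hcovS u huS; tauto
  · have := hcovS w hwS; tauto

end SimpleGraph

open SimpleGraph

/-- Gluing criterion: with a, b adjacent covering all other vertices and both
neighborhoods inducing (4,5)-Ramsey graphs, F has no 5-clique and no
independent 5-set iff no 5-element set W ⊆ K ∪ A ∪ B meeting both A and B is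
a clique or an independent set, where K = N(a) ∩ N(b),
A = N(b) \ (N(a) ∪ {a}) and B = N(a) \ (N(b) ∪ {b}). -/
theorem gluing_criterion
    {V : Type*} (F : SimpleGraph V) {a b : V} (hab : F.Adj a b)
    (hcov : ∀ v : V, v ≠ a → v ≠ b → F.Adj a v ∨ F.Adj b v)
    (hNa4 : (F.induce (F.neighborSet a)).CliqueFree 4)
    (hNa5 : (F.induce (F.neighborSet a))ᶜ.CliqueFree 5)
    (hNb4 : (F.induce (F.neighborSet b)).CliqueFree 4)
    (hNb5 : (F.induce (F.neighborSet b))ᶜ.CliqueFree 5) :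
    (F.CliqueFree 5 ∧ Fᶜ.CliqueFree 5) ↔
      ¬ ∃ W : Finset V, W.card = 5 ∧
        (W : Set V) ⊆ (F.neighborSet a ∩ F.neighborSet b) ∪
            (F.neighborSet b \ (F.neighborSet a ∪ {a})) ∪
            (F.neighborSet a \ (F.neighborSet b ∪ {b})) ∧
        ((W : Set V) ∩ (F.neighborSet b \ (F.neighborSet a ∪ {a}))).Nonempty ∧
        ((W : Set V) ∩ (F.neighborSet a \ (F.neighborSet b ∪ {b}))).Nonempty ∧
        (F.IsClique (W : Set V) ∨ Fᶜ.IsClique (W : Set V)) := by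
  rw [compl_induce, cliqueFree_induce_iff] at hNa5 hNb5
  rw [cliqueFree_induce_iff] at hNa4 hNb4
  have hcov' : ∀ v : V, v ≠ b → v ≠ a → F.Adj b v ∨ F.Adj a v :=
    fun v hvb hva => (hcov v hva hvb).symm
  refine ⟨fun ⟨h5, h5c⟩ ⟨W, hcard, _, _, _, hW⟩ => hW.elim (h5 W ⟨·, hcard⟩) (h5c W ⟨·, hcard⟩),
    fun hno => ⟨fun S hS => ?_, fun S hS => ?_⟩⟩
  · by_cases haS : a ∈ S
    · exact hS.not_cliqueFreeOn_neighborSet haS hNa4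
    by_cases hbS : b ∈ S
    · exact hS.not_cliqueFreeOn_neighborSet hbS hNb4
    obtain ⟨hsub, hA, hB⟩ := subset_union_and_inter_nonempty_of_not_subset_neighborSet hcov haS
      hbS (fun h => hNa4.mono F (by norm_num) h hS) (fun h => hNb4.mono F (by norm_num) h hS)
    exact hno ⟨S, hS.card_eq, hsub, hA, hB, Or.inl hS.isClique⟩
  · by_cases haS : a ∈ S
    · exact hNb5 (hS.isClique.subset_neighborSet_of_compl hab hcov haS) hS
    by_cases hbS : b ∈ S
    · exact hNa5 (hS.isClique.subset_neighborSet_of_compl hab.symm hcov' hbS) hS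
    obtain ⟨hsub, hA, hB⟩ := subset_union_and_inter_nonempty_of_not_subset_neighborSet hcov haS
      hbS (fun h => hNa5 h hS) (fun h => hNb5 h hS)
    exact hno ⟨S, hS.card_eq, hsub, hA, hB, Or.inr hS.isClique⟩
end

section
/- Assume that every simple graph on 18 vertices contains a 4-clique or an independent 4-set (i.e., R(4,4) ≤ 18). Then every simple graph on 24 vertices that contains no 4-clique and no independent 5-set has minimum degree at least 6. -/
/-!
The non-neighbours of a vertex `v` span no 4-clique, and no independent 4-set either, since `v`
would extend it to an independent 5-set. By `R(4,4) ≤ 18` there are therefore at most 17 of them,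
so `v` has at least `24 - 1 - 17 = 6` neighbours.
-/

open Finset

namespace SimpleGraph

variable {V W : Type*}

lemma comap_compl_of_injective {f : V → W} (hf : f.Injective) (G : SimpleGraph W) :
    Gᶜ.comap f = (G.comap f)ᶜ := by
  ext a b
  simp [hf.ne_iff]

lemma exists_isNClique_or_compl_of_le_card {n k l : ℕ}
    (hR : ∀ H : SimpleGraph (Fin n),
      (∃ s : Finset (Fin n), H.IsNClique k s) ∨ ∃ s : Finset (Fin n), Hᶜ.IsNClique l s)
    (G : SimpleGraph V) (S : Finset V) (hS : n ≤ #S) :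
    (∃ s ⊆ S, G.IsNClique k s) ∨ ∃ s ⊆ S, Gᶜ.IsNClique l s := by
  let f : Fin n ↪ V :=
    (Fin.castLEEmb hS).trans (S.equivFin.symm.toEmbedding.trans (Function.Embedding.subtype _))
  have map_subset (s : Finset (Fin n)) : s.map f ⊆ S := by
    intro x hx
    obtain ⟨i, -, rfl⟩ := mem_map.1 hx
    exact (S.equivFin.symm _).2
  rcases hR (G.comap f) with ⟨s, hs⟩ | ⟨s, hs⟩
  · exact .inl ⟨s.map f, map_subset s, hs.map.mono (map_comap_le f G)⟩
  · rw [← comap_compl_of_injective f.injective] at hs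
    exact .inr ⟨s.map f, map_subset s, hs.map.mono (map_comap_le f Gᶜ)⟩

lemma degree_compl_lt_of_ramsey [Fintype V] [DecidableEq V] {n k l : ℕ}
    (hR : ∀ H : SimpleGraph (Fin n),
      (∃ s : Finset (Fin n), H.IsNClique k s) ∨ ∃ s : Finset (Fin n), Hᶜ.IsNClique l s)
    (G : SimpleGraph V) [DecidableRel G.Adj] (hk : G.CliqueFree k) (hl : Gᶜ.CliqueFree (l + 1))
    (v : V) : Gᶜ.degree v < n := by
  by_contra! hdeg
  rw [← card_neighborFinset_eq_degree] at hdeg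
  rcases exists_isNClique_or_compl_of_le_card hR G _ hdeg with ⟨s, -, hs⟩ | ⟨s, hsv, hs⟩
  · exact hk s hs
  · exact hl _ (hs.insert fun b hb => (mem_neighborFinset _ _ _).1 (hsv hb))

end SimpleGraph

/-- Assuming R(4,4) ≤ 18, every graph on 24 vertices with no 4-clique and no
independent 5-set has minimum degree at least 6. -/
theorem min_degree_ge_6
    (hR44 : ∀ G : SimpleGraph (Fin 18),
      (∃ s : Finset (Fin 18), G.IsNClique 4 s) ∨ (∃ s : Finset (Fin 18), Gᶜ.IsNClique 4 s))
    (G : SimpleGraph (Fin 24)) [DecidableRel G.Adj]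
    (h4 : G.CliqueFree 4) (h5 : Gᶜ.CliqueFree 5) (v : Fin 24) :
    6 ≤ G.degree v := by
  have h := G.degree_compl_lt_of_ramsey hR44 h4 h5 v
  rw [SimpleGraph.degree_compl, Fintype.card_fin] at h
  omega
end

section
/- Assume that every simple graph on 25 vertices contains a 4-clique or an independent 5-set (i.e., R(4,5) ≤ 25). Let F be a simple graph on 48 vertices containing no 5-clique and no independent 5-set. Then either F has a vertex of degree 24 adjacent in F to at least 12 vertices of degree 24 in F, or the complement of F has a vertex of degree 24 in the complement adjacent in the complement to at least 12 vertices of degree 24 in the complement. -/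
/-!
Every vertex of a graph without a `(k+1)`-clique and without an independent `l`-set has fewer
than `R(k,l)` neighbours, since its neighbourhood contains no `k`-clique. With `R(4,5) ≤ 25`,
applied to `F` and to its complement, all degrees of `F` are `23` or `24`. Colour a vertex
blue if its `F`-degree is `24` and red otherwise (then its complement-degree is `24`). If the
theorem failed, each blue vertex would have at least `13` `F`-neighbours among the red vertices
and each red vertex at least `13` non-neighbours among the blue ones. Counting the pairs
(blue, red) gives `13 · 48 ≤ #blue · #red ≤ 24 ^ 2`, which is false.
-/

open Finset

namespace SimpleGraph

variable {V : Type*}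

theorem degree_lt_of_forall_isNClique_or_isNClique_compl [Fintype V] {G : SimpleGraph V}
    [DecidableRel G.Adj] {m k l : ℕ}
    (hR : ∀ H : SimpleGraph (Fin m), (∃ s, H.IsNClique k s) ∨ ∃ s, Hᶜ.IsNClique l s)
    (hG : G.CliqueFree (k + 1)) (hGc : Gᶜ.CliqueFree l) (v : V) : G.degree v < m := by
  by_contra! h
  obtain ⟨f⟩ : Nonempty (Fin m ↪ G.neighborSet v) :=
    Function.Embedding.nonempty_of_card_le (by rwa [Fintype.card_fin, card_neighborSet_eq_degree])
  let e := Embedding.comap f (G.induce (G.neighborSet v))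
  have hN : (G.induce (G.neighborSet v)).CliqueFree k := by
    rw [cliqueFree_induce_iff]
    simpa using CliqueFreeOn.of_succ G hG.cliqueFreeOn (Set.mem_univ v)
  rcases hR ((G.induce (G.neighborSet v)).comap f) with ⟨s, hs⟩ | ⟨s, hs⟩
  · exact hN.comap e.isContained s hs
  · exact hGc.comap (Embedding.complEquiv ((Embedding.induce _).comp e)).isContained s hs

theorem sum_card_filter_adj_add_sum_card_filter_compl_adj [DecidableEq V] (G : SimpleGraph V)
    [DecidableRel G.Adj] {s t : Finset V} (hst : Disjoint s t) :
    ∑ a ∈ s, #(t.filter (G.Adj a)) + ∑ b ∈ t, #(s.filter (Gᶜ.Adj b)) = #s * #t := by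
  have double_count : ∑ b ∈ t, #(s.filter (Gᶜ.Adj b)) = ∑ a ∈ s, #(t.filter (Gᶜ.Adj a)) := by
    have := sum_card_bipartiteAbove_eq_sum_card_bipartiteBelow Gᶜ.Adj (s := s) (t := t)
    simp only [bipartiteAbove, bipartiteBelow, Gᶜ.adj_comm _ _] at this
    exact this.symm
  have split (a : V) (ha : a ∈ s) : #(t.filter (G.Adj a)) + #(t.filter (Gᶜ.Adj a)) = #t := by
    rw [← card_filter_add_card_filter_not (s := t) (G.Adj a)]
    congr 2
    refine filter_congr fun b hb ↦ ?_
    simp [hst.forall_ne_finset ha hb]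
  rw [double_count, ← sum_add_distrib, sum_congr rfl split, sum_const, smul_eq_mul]

theorem four_mul_le_card_of_le_card_filter_neighborFinset [Fintype V] [DecidableEq V]
    [Nonempty V] (G : SimpleGraph V) [DecidableRel G.Adj] (p : V → Prop) [DecidablePred p]
    {r : ℕ} (hp : ∀ a, p a → r ≤ #((G.neighborFinset a).filter (¬ p ·)))
    (hnp : ∀ b, ¬ p b → r ≤ #((Gᶜ.neighborFinset b).filter p)) :
    4 * r ≤ Fintype.card V := by
  set s := univ.filter p
  set t := univ.filter (¬ p ·)
  have filter_neighborFinset (H : SimpleGraph V) [DecidableRel H.Adj] (a : V) (q : V → Prop)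
      [DecidablePred q] : (H.neighborFinset a).filter q = (univ.filter q).filter (H.Adj a) := by
    ext; simp [and_comm]
  have hs : #s * r ≤ ∑ a ∈ s, #(t.filter (G.Adj a)) := by
    simpa using card_nsmul_le_sum s (fun a ↦ #(t.filter (G.Adj a))) r fun a ha ↦
      filter_neighborFinset G a (¬ p ·) ▸ hp a (mem_filter.1 ha).2
  have ht : #t * r ≤ ∑ b ∈ t, #(s.filter (Gᶜ.Adj b)) := by
    simpa using card_nsmul_le_sum t (fun b ↦ #(s.filter (Gᶜ.Adj b))) r fun b hb ↦
      filter_neighborFinset Gᶜ b p ▸ hnp b (mem_filter.1 hb).2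
  have hpairs := sum_card_filter_adj_add_sum_card_filter_compl_adj G
    (disjoint_filter_filter_not univ univ p)
  have hst : #s + #t = Fintype.card V := card_filter_add_card_filter_not p
  have hamgm := four_mul_le_sq_add #s #t
  rw [hst] at hamgm
  have hpos : 0 < Fintype.card V := Fintype.card_pos
  -- `r * |V| ≤ #s * #t ≤ |V| ^ 2 / 4`
  nlinarith

end SimpleGraph

open SimpleGraph

/-- Assuming R(4,5) ≤ 25, every (5,5)-Ramsey graph F on 48 vertices has, in F
or in its complement, a vertex of degree 24 adjacent to at least 12 vertices
of degree 24 (degrees and adjacency taken in the same graph). -/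
theorem ramsey55_48_exists_good_vertex
    (hR45 : ∀ G : SimpleGraph (Fin 25),
      (∃ s : Finset (Fin 25), G.IsNClique 4 s) ∨ (∃ s : Finset (Fin 25), Gᶜ.IsNClique 5 s))
    (F : SimpleGraph (Fin 48)) [DecidableRel F.Adj]
    (h5 : F.CliqueFree 5) (hi : Fᶜ.CliqueFree 5) :
    (∃ a, F.degree a = 24 ∧
      12 ≤ ((F.neighborFinset a).filter fun w => F.degree w = 24).card) ∨
    (∃ a, Fᶜ.degree a = 24 ∧
      12 ≤ ((Fᶜ.neighborFinset a).filter fun w => Fᶜ.degree w = 24).card) := by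
  by_contra! ⟨hF, hFc⟩
  have hcompl (v : Fin 48) : Fᶜ.degree v = 24 ↔ ¬ F.degree v = 24 := by
    have hlt := degree_lt_of_forall_isNClique_or_isNClique_compl hR45 h5 hi v
    have hlt' := degree_lt_of_forall_isNClique_or_isNClique_compl hR45 hi (by rwa [compl_compl]) v
    rw [degree_compl, Fintype.card_fin] at hlt' ⊢
    omega
  refine absurd (four_mul_le_card_of_le_card_filter_neighborFinset F (F.degree · = 24) (r := 13)
    (fun a ha ↦ ?_) (fun b hb ↦ ?_)) (by simp)
  · have hsplit := card_filter_add_card_filter_not (s := F.neighborFinset a) (F.degree · = 24)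
    rw [card_neighborFinset_eq_degree, ha] at hsplit
    have := hF a ha
    omega
  · have hb' := (hcompl b).2 hb
    have hsplit := card_filter_add_card_filter_not (s := Fᶜ.neighborFinset b) (F.degree · = 24)
    rw [card_neighborFinset_eq_degree, hb'] at hsplit
    have hfew := hFc b hb'
    rw [filter_congr fun w _ ↦ hcompl w] at hfew
    omega
end
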